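/- Let X be a normed space (real or complex regarded as a real normed space). For nonempty closed bounded convex sets A, B ⊆ X and t ∈ [0,1], define Σ(A,B,t) = closure((1−t)A + tB). Then Σ is a consistent geodesic bicombing on CB(X) with the Hausdorff metric; in particular Σ(closure((1−r)A+rB), closure((1−s)A+sB), t) = Σ(A,B,(1−t)r+ts) for all r,s,t ∈ [0,1] with r < s. -/

import Mathlib

open Pointwise

/-- The element of CB(X): nonempty, closed, bounded, convex. -/
def MemCB {X : Type*} [NormedAddCommGroup X] [NormedSpace ℝ X] (A : Set X) : Prop :=
  A.Nonempty ∧ IsClosed A ∧ Bornology.IsBounded A ∧ Convex ℝ A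

/-!
For `s ≤ t` and convex `A`, `B`, splitting `1 - s = (t - s) + (1 - t)` and `t = (t - s) + s` writes
`(1 - s) • A + s • B` and `(1 - t) • A + t • B` as `(t - s) • A + D` and `(t - s) • B + D` with
`D = (1 - t) • A + s • B`; translation by a common summand does not increase the Hausdorff
distance, so the two sets are within `(t - s) * d_H(A, B)`. Equality follows from the triangle
inequality through the endpoints `A` and `B`. For consistency, closures can be dropped inside a
closure, and convexity collapses the iterated combination to `(1 - u) • A + u • B` with
`u = (1 - t) * r + t * s`.
-/

open Metric Set

theorem closure_closure_add_closure {G : Type*} [TopologicalSpace G] [Add G] [ContinuousAdd G]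
    (s t : Set G) : closure (closure s + closure t) = closure (s + t) := by
  refine (closure_minimal ?_ isClosed_closure).antisymm
    (closure_mono (add_subset_add subset_closure subset_closure))
  rintro _ ⟨x, hx, y, hy, rfl⟩
  exact map_mem_closure₂ continuous_add hx hy fun a ha b hb => add_mem_add ha hb

section HausdorffPointwise

variable {E : Type*}

theorem Metric.hausdorffEDist_add_right_le [SeminormedAddCommGroup E] (s t u : Set E) :
    hausdorffEDist (s + u) (t + u) ≤ hausdorffEDist s t := by
  have key : ∀ s t : Set E, ∀ x ∈ s + u, infEDist x (t + u) ≤ hausdorffEDist s t := by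
    rintro s t _ ⟨x, hx, y, hy, rfl⟩
    calc infEDist (x + y) (t + u) ≤ infEDist (x + y) ((· + y) '' t) :=
          infEDist_anti (image_subset_iff.2 fun z hz => add_mem_add hz hy)
      _ = infEDist x t := infEDist_image (isometry_add_right y)
      _ ≤ hausdorffEDist s t := infEDist_le_hausdorffEDist_of_mem hx
  exact hausdorffEDist_le_of_infEDist (key s t)
    (hausdorffEDist_comm (s := s) ▸ key t s)

theorem Metric.hausdorffEDist_smul₀_le {𝕜 : Type*} [NormedDivisionRing 𝕜]
    [SeminormedAddCommGroup E] [Module 𝕜 E] [NormSMulClass 𝕜 E] {c : 𝕜} (hc : c ≠ 0)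
    (s t : Set E) : hausdorffEDist (c • s) (c • t) ≤ ‖c‖₊ • hausdorffEDist s t := by
  have key : ∀ s t : Set E, ∀ x ∈ c • s, infEDist x (c • t) ≤ ‖c‖₊ • hausdorffEDist s t := by
    rintro s t _ ⟨x, hx, rfl⟩
    rw [infEDist_smul₀ hc]
    gcongr
    exact infEDist_le_hausdorffEDist_of_mem hx
  exact hausdorffEDist_le_of_infEDist (key s t)
    (hausdorffEDist_comm (s := s) ▸ key t s)

end HausdorffPointwise

section MinkowskiBicombing

variable {X : Type*} [NormedAddCommGroup X] [NormedSpace ℝ X] {A B : Set X}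

def minkowskiBicombing (A B : Set X) (t : ℝ) : Set X :=
  closure ((1 - t) • A + t • B)

theorem minkowskiBicombing_zero (hA : IsClosed A) (hB : B.Nonempty) :
    minkowskiBicombing A B 0 = A := by
  rw [minkowskiBicombing, sub_zero, one_smul, zero_smul_set hB, add_zero, hA.closure_eq]

theorem minkowskiBicombing_one (hA : A.Nonempty) (hB : IsClosed B) :
    minkowskiBicombing A B 1 = B := by
  rw [minkowskiBicombing, sub_self, one_smul, zero_smul_set hA, zero_add, hB.closure_eq]

theorem MemCB.minkowskiBicombing (hA : MemCB A) (hB : MemCB B) (t : ℝ) :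
    MemCB (minkowskiBicombing A B t) :=
  ⟨(hA.1.smul_set.add hB.1.smul_set).closure, isClosed_closure,
    ((hA.2.2.1.smul₀ _).add (hB.2.2.1.smul₀ _)).closure,
    ((hA.2.2.2.smul _).add (hB.2.2.2.smul _)).closure⟩

theorem hausdorffEDist_minkowskiBicombing_ne_top (hA : MemCB A) (hB : MemCB B) (s t : ℝ) :
    hausdorffEDist (minkowskiBicombing A B s) (minkowskiBicombing A B t) ≠ ⊤ :=
  have hs := hA.minkowskiBicombing hB s
  have ht := hA.minkowskiBicombing hB t
  hausdorffEDist_ne_top_of_nonempty_of_bounded hs.1 ht.1 hs.2.2.1 ht.2.2.1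

theorem hausdorffDist_minkowskiBicombing_le (hA : Convex ℝ A) (hB : Convex ℝ B)
    (hAB : hausdorffEDist A B ≠ ⊤) {s t : ℝ} (hs : 0 ≤ s) (hst : s ≤ t) (ht : t ≤ 1) :
    hausdorffDist (minkowskiBicombing A B s) (minkowskiBicombing A B t) ≤
      (t - s) * hausdorffDist A B := by
  rw [minkowskiBicombing, minkowskiBicombing, hausdorffDist_closure]
  rcases hst.eq_or_lt with rfl | hlt
  · simp
  set D := (1 - t) • A + s • B
  have hsA : (1 - s) • A + s • B = (t - s) • A + D := by
    rw [show 1 - s = (t - s) + (1 - t) by ring, hA.add_smul (by linarith) (by linarith),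
      add_assoc]
  have htB : (1 - t) • A + t • B = (t - s) • B + D := by
    rw [← sub_add_cancel t s, hB.add_smul (by linarith) hs, sub_add_cancel, add_left_comm]
  have hle : hausdorffEDist ((1 - s) • A + s • B) ((1 - t) • A + t • B) ≤
      ‖t - s‖₊ • hausdorffEDist A B := by
    rw [hsA, htB]
    exact (hausdorffEDist_add_right_le _ _ D).trans
      (hausdorffEDist_smul₀_le (sub_ne_zero.2 hlt.ne') A B)
  have := ENNReal.toReal_mono (ENNReal.mul_ne_top ENNReal.coe_ne_top hAB) hle
  rwa [ENNReal.toReal_mul, ENNReal.coe_toReal, coe_nnnorm,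
    Real.norm_of_nonneg (sub_nonneg.2 hst)] at this

theorem hausdorffDist_minkowskiBicombing_of_le (hA : MemCB A) (hB : MemCB B) {s t : ℝ}
    (hs : 0 ≤ s) (hst : s ≤ t) (ht : t ≤ 1) :
    hausdorffDist (minkowskiBicombing A B s) (minkowskiBicombing A B t) =
      (t - s) * hausdorffDist A B := by
  have hAB := hausdorffEDist_ne_top_of_nonempty_of_bounded hA.1 hB.1 hA.2.2.1 hB.2.2.1
  refine le_antisymm (hausdorffDist_minkowskiBicombing_le hA.2.2.2 hB.2.2.2 hAB hs hst ht) ?_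
  have h0s := hausdorffDist_minkowskiBicombing_le hA.2.2.2 hB.2.2.2 hAB le_rfl hs (hst.trans ht)
  have ht1 := hausdorffDist_minkowskiBicombing_le hA.2.2.2 hB.2.2.2 hAB (hs.trans hst) ht le_rfl
  have fin := hausdorffEDist_minkowskiBicombing_ne_top hA hB
  have tri₁ := hausdorffDist_triangle (fin 0 s) (u := minkowskiBicombing A B 1)
  have tri₂ := hausdorffDist_triangle (fin s t) (u := minkowskiBicombing A B 1)
  rw [minkowskiBicombing_zero hA.2.1 hB.1] at tri₁ h0s
  rw [minkowskiBicombing_one hA.1 hB.2.1] at tri₁ tri₂ ht1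
  linarith

theorem hausdorffDist_minkowskiBicombing (hA : MemCB A) (hB : MemCB B) {s t : ℝ}
    (hs : s ∈ Icc (0 : ℝ) 1) (ht : t ∈ Icc (0 : ℝ) 1) :
    hausdorffDist (minkowskiBicombing A B s) (minkowskiBicombing A B t) =
      |t - s| * hausdorffDist A B := by
  rcases le_total s t with hst | hts
  · rw [hausdorffDist_minkowskiBicombing_of_le hA hB hs.1 hst ht.2,
      abs_of_nonneg (sub_nonneg.2 hst)]
  · rw [hausdorffDist_comm, hausdorffDist_minkowskiBicombing_of_le hA hB ht.1 hts hs.2,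
      abs_of_nonpos (sub_nonpos.2 hts), neg_sub]

theorem minkowskiBicombing_minkowskiBicombing (hA : Convex ℝ A) (hB : Convex ℝ B) {r s t : ℝ}
    (hr : r ∈ Icc (0 : ℝ) 1) (hs : s ∈ Icc (0 : ℝ) 1) (ht : t ∈ Icc (0 : ℝ) 1) :
    minkowskiBicombing (minkowskiBicombing A B r) (minkowskiBicombing A B s) t =
      minkowskiBicombing A B ((1 - t) * r + t * s) := by
  obtain ⟨hr₀, hr₁⟩ := hr
  obtain ⟨hs₀, hs₁⟩ := hs
  obtain ⟨ht₀, ht₁⟩ := ht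
  simp only [minkowskiBicombing]
  rw [← closure_smul₀, ← closure_smul₀, closure_closure_add_closure, smul_add, smul_add,
    smul_smul, smul_smul, smul_smul, smul_smul, add_add_add_comm,
    ← hA.add_smul (by nlinarith) (by nlinarith), ← hB.add_smul (by nlinarith) (by nlinarith),
    show (1 - t) * (1 - r) + t * (1 - s) = 1 - ((1 - t) * r + t * s) by ring]

end MinkowskiBicombing

/-- Σ(A,B,t) = closure((1−t)A + tB) is a consistent geodesic
bicombing on CB(X) with the Hausdorff metric. -/
theorem minkowski_bicombing_consistent {X : Type*} [NormedAddCommGroup X]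
    [NormedSpace ℝ X]
    (Sig : Set X → Set X → ℝ → Set X)
    (hSig : Sig = fun A B t => closure ((1 - t) • A + t • B)) :
    ∀ A B : Set X, MemCB A → MemCB B →
      (∀ t ∈ Set.Icc (0:ℝ) 1, MemCB (Sig A B t)) ∧
      Sig A B 0 = A ∧ Sig A B 1 = B ∧
      (∀ s ∈ Set.Icc (0:ℝ) 1, ∀ t ∈ Set.Icc (0:ℝ) 1,
        Metric.hausdorffDist (Sig A B s) (Sig A B t) =
          |t - s| * Metric.hausdorffDist A B) ∧
      (∀ r ∈ Set.Icc (0:ℝ) 1, ∀ s ∈ Set.Icc (0:ℝ) 1, ∀ t ∈ Set.Icc (0:ℝ) 1,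
        r < s → Sig (Sig A B r) (Sig A B s) t = Sig A B ((1 - t) * r + t * s)) := by
  have hSig' : Sig = minkowskiBicombing := hSig
  subst hSig'
  intro A B hA hB
  exact ⟨fun t _ => hA.minkowskiBicombing hB t, minkowskiBicombing_zero hA.2.1 hB.1,
    minkowskiBicombing_one hA.1 hB.2.1,
    fun s hs t ht => hausdorffDist_minkowskiBicombing hA hB hs ht,
    fun r hr s hs t ht _ => minkowskiBicombing_minkowskiBicombing hA.2.2.2 hB.2.2.2 hr hs ht⟩
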